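/- Let |ψ_NGHZ⟩ = (1/√N) ∑_{k=1}^N |k⟩^{⊗N} be the generalized N-party GHZ state on (ℂ^N)^{⊗N}. For every orthonormal basis {e_1,…,e_N} of one party's space ℂ^N, the state obtained by dephasing that party, ∑_i (|e_i⟩⟨e_i| ⊗ I^{⊗(N−1)}) |ψ_NGHZ⟩⟨ψ_NGHZ| (|e_i⟩⟨e_i| ⊗ I^{⊗(N−1)}), has von Neumann entropy exactly log₂ N: each outcome has probability 1/N and the conditional state of the remaining N−1 parties is pure. -/

import Mathlib

open Matrix

/-- von Neumann entropy in bits (with convention `0 * log₂ 0 = 0`). -/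
noncomputable def vnEntropy {n : Type*} [Fintype n] [DecidableEq n] (A : Matrix n n ℂ) : ℝ :=
  if h : A.IsHermitian then -∑ i, h.eigenvalues i * Real.logb 2 (h.eigenvalues i) else 0

/-- The generalized N-party GHZ state `(1/√N) ∑_k |k⟩^{⊗N}` on `(ℂ^N)^{⊗N}`, the latter
realized with index set `Fin N → Fin N`. -/
noncomputable def ghzVec (N : ℕ) : (Fin N → Fin N) → ℂ := fun g =>
  if ∃ c, ∀ a, g a = c then ((1 / Real.sqrt N : ℝ) : ℂ) else 0

/-- The projector `|e_i⟩⟨e_i| ⊗ I^{⊗(N−1)}` acting on the party `j0` of `(ℂ^N)^{⊗N}`. -/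
noncomputable def partyProj {N : ℕ} (j0 : Fin N) (w : Fin N → ℂ) :
    Matrix (Fin N → Fin N) (Fin N → Fin N) ℂ := fun g g' =>
  w (g j0) * star (w (g' j0)) * (if ∀ a, a ≠ j0 → g a = g' a then 1 else 0)

/-! Dephasing a pure state `ρ = |ψ⟩⟨ψ|` by orthogonal projections `Pᵢ` gives `D = ∑ Pᵢ ρ Pᵢ`
with `D² = ∑ pᵢ Pᵢ ρ Pᵢ`, because `ρ Pᵢ ρ = pᵢ ρ` for `pᵢ = ⟨ψ|Pᵢ|ψ⟩` and the cross terms vanish.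
For the GHZ state every outcome has `pᵢ = 1/N`, so `D² = D/N` with `tr D = 1`: the spectrum of `D`
is `1/N` with multiplicity `N` and `0` otherwise, whence `S(D) = log₂ N`. -/

namespace Matrix

variable {ι n R : Type*} [Fintype n]

theorem vecMulVec_mul_mul_vecMulVec [CommSemiring R] (u v u' v' : n → R) (M : Matrix n n R) :
    vecMulVec u v * M * vecMulVec u' v' = (v ⬝ᵥ (M *ᵥ u')) • vecMulVec u v' := by
  rw [Matrix.mul_assoc, mul_vecMulVec, vecMulVec_mul_vecMulVec, vecMulVec_smul]

theorem vecMulVec_star_mul_vecMulVec_star [DecidableEq ι] [CommSemiring R] [StarRing R]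
    {e : ι → n → R} (he : ∀ i j, star (e i) ⬝ᵥ e j = if i = j then 1 else 0) (i j : ι) :
    vecMulVec (e i) (star (e i)) * vecMulVec (e j) (star (e j)) =
      if i = j then vecMulVec (e i) (star (e i)) else 0 := by
  rw [vecMulVec_mul_vecMulVec, he]
  split_ifs with hij <;> simp [hij]

def dephase [Fintype ι] [Semiring R] (P : ι → Matrix n n R) (ρ : Matrix n n R) : Matrix n n R :=
  ∑ i, P i * ρ * P i

theorem isHermitian_dephase [Fintype ι] [Semiring R] [StarRing R] {P : ι → Matrix n n R}
    (hP : ∀ i, (P i).IsHermitian) {ρ : Matrix n n R} (hρ : ρ.IsHermitian) :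
    (dephase P ρ).IsHermitian :=
  isSelfAdjoint_sum _ fun i _ =>
    (by simpa only [(hP i).eq] using isHermitian_conjTranspose_mul_mul (P i) hρ :
      (P i * ρ * P i).IsHermitian)

theorem trace_dephase [Fintype ι] [CommSemiring R] {P : ι → Matrix n n R}
    (hP : ∀ i, P i * P i = P i) (u v : n → R) :
    (dephase P (vecMulVec u v)).trace = ∑ i, v ⬝ᵥ (P i *ᵥ u) := by
  simp only [dephase, trace_sum]
  refine Finset.sum_congr rfl fun i _ => ?_
  rw [trace_mul_cycle, hP, mul_vecMulVec, trace_vecMulVec, dotProduct_comm]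

theorem dephase_vecMulVec_mul_self [Fintype ι] [DecidableEq ι] [CommSemiring R]
    {P : ι → Matrix n n R}
    (hP : ∀ i j, P i * P j = if i = j then P i else 0) {u v : n → R} {p : R}
    (hp : ∀ i, v ⬝ᵥ (P i *ᵥ u) = p) :
    dephase P (vecMulVec u v) * dephase P (vecMulVec u v) = p • dephase P (vecMulVec u v) := by
  have hterm : ∀ i j, P i * vecMulVec u v * P i * (P j * vecMulVec u v * P j) =
      if i = j then p • (P i * vecMulVec u v * P i) else 0 := by
    intro i j
    calc P i * vecMulVec u v * P i * (P j * vecMulVec u v * P j)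
        = P i * vecMulVec u v * (P i * P j) * vecMulVec u v * P j := by
          simp only [Matrix.mul_assoc]
      _ = _ := by
          rw [hP]
          split_ifs with hij
          · subst hij
            rw [show P i * vecMulVec u v * P i * vecMulVec u v * P i =
                P i * (vecMulVec u v * P i * vecMulVec u v) * P i by simp only [Matrix.mul_assoc],
              vecMulVec_mul_mul_vecMulVec, hp, Matrix.mul_smul, Matrix.smul_mul]
          · simp
  simp only [dephase, Finset.sum_mul_sum, hterm, Finset.sum_ite_eq, Finset.mem_univ, if_true,
    Finset.smul_sum]

variable {𝕜 : Type*} [RCLike 𝕜] {A : Matrix n n 𝕜}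

theorem IsHermitian.eigenvalues_eq_zero_or_eq_of_mul_self_eq_smul [DecidableEq n]
    (hA : A.IsHermitian) {c : ℝ} (h : A * A = (c : 𝕜) • A) (i : n) :
    hA.eigenvalues i = 0 ∨ hA.eigenvalues i = c := by
  set v : n → 𝕜 := ⇑(hA.eigenvectorBasis i)
  set t := hA.eigenvalues i
  have hv : A *ᵥ v = (t : 𝕜) • v := by
    rw [hA.mulVec_eigenvectorBasis i, RCLike.real_smul_eq_coe_smul (K := 𝕜)]
  have hv0 : v ≠ 0 := (WithLp.ofLp_eq_zero 2).ne.2 <| hA.eigenvectorBasis.orthonormal.ne_zero i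
  have key : ((t * t : ℝ) : 𝕜) • v = ((c * t : ℝ) : 𝕜) • v := by
    calc ((t * t : ℝ) : 𝕜) • v = A *ᵥ (A *ᵥ v) := by
          rw [hv, mulVec_smul, hv, smul_smul, RCLike.ofReal_mul]
      _ = ((c * t : ℝ) : 𝕜) • v := by
          rw [mulVec_mulVec, h, smul_mulVec, hv, smul_smul, RCLike.ofReal_mul]
  have htt : t * t = c * t := RCLike.ofReal_injective (smul_left_injective 𝕜 hv0 key)
  exact (mul_eq_mul_right_iff.mp htt).symm

end Matrix

theorem vnEntropy_eq_neg_logb_of_mul_self_eq_smul {n : Type*} [Fintype n] [DecidableEq n]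
    {A : Matrix n n ℂ} (hA : A.IsHermitian) {c : ℝ} (h : A * A = (c : ℂ) • A)
    (htr : A.trace = 1) : vnEntropy A = -Real.logb 2 c := by
  have hsum : ∑ i, hA.eigenvalues i = 1 := by
    apply Complex.ofReal_injective
    push_cast
    exact hA.trace_eq_sum_eigenvalues.symm.trans htr
  rw [vnEntropy, dif_pos hA, ← one_mul (Real.logb 2 c), ← hsum, Finset.sum_mul]
  congr 1
  refine Finset.sum_congr rfl fun i _ => ?_
  rcases hA.eigenvalues_eq_zero_or_eq_of_mul_self_eq_smul h i with h0 | hc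
  · simp [h0]
  · rw [hc]

open scoped Kronecker

variable {N : ℕ}

theorem partyProj_eq_submatrix_kronecker (j0 : Fin N) (w : Fin N → ℂ) :
    partyProj j0 w = (vecMulVec w (star w) ⊗ₖ (1 : Matrix ({a // a ≠ j0} → Fin N) _ ℂ)).submatrix
      (Equiv.funSplitAt j0 (Fin N)) (Equiv.funSplitAt j0 (Fin N)) := by
  ext g g'
  simp [partyProj, one_apply, funext_iff, vecMulVec_apply]

theorem partyProj_isHermitian (j0 : Fin N) (w : Fin N → ℂ) : (partyProj j0 w).IsHermitian := by
  rw [partyProj_eq_submatrix_kronecker, IsHermitian, conjTranspose_submatrix,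
    conjTranspose_kronecker, conjTranspose_vecMulVec, star_star, conjTranspose_one]

theorem partyProj_mul_partyProj (j0 : Fin N) {e : Fin N → Fin N → ℂ}
    (he : ∀ i j, star (e i) ⬝ᵥ e j = if i = j then 1 else 0) (i j : Fin N) :
    partyProj j0 (e i) * partyProj j0 (e j) = if i = j then partyProj j0 (e i) else 0 := by
  simp only [partyProj_eq_submatrix_kronecker, submatrix_mul_equiv, ← mul_kronecker_mul,
    Matrix.one_mul, vecMulVec_star_mul_vecMulVec_star he]
  split_ifs <;> simp

theorem ghzVec_const (c : Fin N) : ghzVec N (fun _ => c) = ((1 / Real.sqrt N : ℝ) : ℂ) :=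
  if_pos ⟨c, fun _ => rfl⟩

theorem ghzVec_eq_zero (g : Fin N → Fin N) (hg : g ∉ Set.range (Function.const (Fin N))) :
    ghzVec N g = 0 :=
  if_neg fun ⟨c, hc⟩ => hg ⟨c, funext fun a => (hc a).symm⟩

theorem star_ghzVec : star (ghzVec N) = ghzVec N := by
  ext g
  simp only [Pi.star_apply, ghzVec, apply_ite star, star_zero, Complex.star_def,
    Complex.conj_ofReal]

theorem sum_mul_ghzVec (hN : 0 < N) (F : (Fin N → Fin N) → ℂ) :
    ∑ g, F g * ghzVec N g = ((1 / Real.sqrt N : ℝ) : ℂ) * ∑ c, F (fun _ => c) := by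
  have : Nonempty (Fin N) := ⟨⟨0, hN⟩⟩
  rw [Finset.mul_sum]
  refine (Fintype.sum_of_injective _ (Function.const_injective (α := Fin N) (β := Fin N)) _ _
    (fun g hg => by rw [ghzVec_eq_zero g hg, mul_zero]) fun c => ?_).symm
  rw [mul_comm]
  exact congrArg _ (ghzVec_const c).symm

theorem star_ghzVec_dotProduct_mulVec (hN : 0 < N) (M : Matrix (Fin N → Fin N) (Fin N → Fin N) ℂ) :
    star (ghzVec N) ⬝ᵥ (M *ᵥ ghzVec N) = (N : ℂ)⁻¹ * ∑ c, ∑ c', M (fun _ => c) (fun _ => c') := by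
  have hsq : ((1 / Real.sqrt N : ℝ) : ℂ) * ((1 / Real.sqrt N : ℝ) : ℂ) = (N : ℂ)⁻¹ := by
    rw [← Complex.ofReal_mul, one_div_mul_one_div, Real.mul_self_sqrt N.cast_nonneg, one_div,
      Complex.ofReal_inv, Complex.ofReal_natCast]
  rw [star_ghzVec, dotProduct_comm, dotProduct, sum_mul_ghzVec hN]
  simp only [mulVec, dotProduct, sum_mul_ghzVec hN, ← Finset.mul_sum, ← mul_assoc, hsq]

theorem partyProj_const_const (j0 : Fin N) (w : Fin N → ℂ) (c c' : Fin N) :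
    partyProj j0 w (fun _ => c) (fun _ => c') = if c = c' then w c * star (w c) else 0 := by
  by_cases hc : c = c'
  · subst hc
    simp [partyProj]
  · -- `c ≠ c'` forces `N ≥ 2`, so some party other than `j0` sees the difference.
    have : Nontrivial (Fin N) := ⟨⟨c, c', hc⟩⟩
    obtain ⟨a, ha⟩ := exists_ne j0
    simp only [partyProj, hc, if_false]
    rw [if_neg fun h => h a ha, mul_zero]

theorem star_ghzVec_dotProduct_partyProj_mulVec (hN : 0 < N) (j0 : Fin N) {w : Fin N → ℂ}
    (hw : star w ⬝ᵥ w = 1) : star (ghzVec N) ⬝ᵥ (partyProj j0 w *ᵥ ghzVec N) = (N : ℂ)⁻¹ := by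
  simp only [star_ghzVec_dotProduct_mulVec hN, partyProj_const_const, Finset.sum_ite_eq,
    Finset.mem_univ, if_true]
  have hw' : ∑ c, w c * star (w c) = 1 := hw ▸ Finset.sum_congr rfl fun c _ => mul_comm _ _
  rw [hw', mul_one]

theorem entropy_of_dephased_ghz
    {N : ℕ} (hN : 0 < N)
    (e : Fin N → (Fin N → ℂ))
    (he : ∀ i j, star (e i) ⬝ᵥ e j = if i = j then 1 else 0) :
    vnEntropy (∑ i,
        partyProj (⟨0, hN⟩ : Fin N) (e i) *
          vecMulVec (ghzVec N) (star (ghzVec N)) *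
        partyProj (⟨0, hN⟩ : Fin N) (e i))
      = Real.logb 2 N := by
  set j0 : Fin N := ⟨0, hN⟩
  set P : Fin N → Matrix (Fin N → Fin N) (Fin N → Fin N) ℂ := fun i => partyProj j0 (e i)
  set ψ := ghzVec N
  set D := dephase P (vecMulVec ψ (star ψ)) with hD
  change vnEntropy D = _
  have hP : ∀ i j, P i * P j = if i = j then P i else 0 := partyProj_mul_partyProj j0 he
  have hp : ∀ i, star ψ ⬝ᵥ (P i *ᵥ ψ) = (N : ℂ)⁻¹ := fun i =>
    star_ghzVec_dotProduct_partyProj_mulVec hN j0 (by simpa using he i i)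
  have hherm : D.IsHermitian := by
    refine isHermitian_dephase (fun i => partyProj_isHermitian j0 (e i)) ?_
    rw [IsHermitian, conjTranspose_vecMulVec, star_star]
  have hsq : D * D = (((N : ℝ)⁻¹ : ℝ) : ℂ) • D := by
    rw [Complex.ofReal_inv, Complex.ofReal_natCast]
    exact dephase_vecMulVec_mul_self hP hp
  have htr : D.trace = 1 := by
    rw [hD, trace_dephase (fun i => by simpa using hP i i)]
    simp only [hp, Finset.sum_const, Finset.card_univ, Fintype.card_fin, nsmul_eq_mul]
    exact mul_inv_cancel₀ (Nat.cast_ne_zero.mpr hN.ne')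
  rw [vnEntropy_eq_neg_logb_of_mul_self_eq_smul hherm hsq htr, Real.logb_inv, neg_neg]
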